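/- Define I(α) = ∫_{X/2}^{X} e(α·y·log y) dy and τ = X^(−23/25). Then ∫_{−τ}^{τ} |I(α)|² dα ≪ X for X sufficiently large. -/

import Mathlib

/-!
Trivially `‖I(α)‖ ≤ X/2`. For `α > 0` the phase `φ(y) = 2παy log y` satisfies
`φ'(y) = 2πα(log y + 1) ≥ 2πα` and `φ'' ≥ 0` on `[X/2, X]`, so the first derivative test gives
`‖I(α)‖ ≤ 1/(πα)`; since `I(-α)` is the conjugate of `I(α)`, `|α| ‖I(α)‖ ≤ 1/π` for all `α`.
Together the two bounds give `‖I(α)‖² ≤ 2(X/2)² / (1 + (πXα/2)²)`, whose integral over the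
whole real line is `X`.
-/

noncomputable def Iint (X α : ℝ) : ℂ :=
  ∫ y in (X / 2)..X, Complex.exp (2 * Real.pi * Complex.I * (α * y * Real.log y))

open Real Set intervalIntegral MeasureTheory

theorem norm_integral_deriv_smul_le_sub {E : Type*} [NormedAddCommGroup E] [NormedSpace ℝ E]
    {ψ ψ' : ℝ → ℝ} {g : ℝ → E} {a b : ℝ} (hab : a ≤ b)
    (hψ : ∀ x ∈ Icc a b, HasDerivAt ψ (ψ' x) x) (hψ'_cont : ContinuousOn ψ' (Icc a b))
    (hψ'_nonpos : ∀ x ∈ Icc a b, ψ' x ≤ 0) (hg : ∀ x, ‖g x‖ ≤ 1) :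
    ‖∫ x in a..b, ψ' x • g x‖ ≤ ψ a - ψ b := by
  have hbound : ∀ x ∈ Icc a b, ‖ψ' x • g x‖ ≤ -ψ' x := fun x hx => by
    rw [norm_smul, Real.norm_of_nonpos (hψ'_nonpos x hx)]
    exact mul_le_of_le_one_right (neg_nonneg.2 (hψ'_nonpos x hx)) (hg x)
  calc _ ≤ ∫ x in a..b, -ψ' x :=
        norm_integral_le_of_norm_le hab (ae_of_all _ fun x hx => hbound x (Ioc_subset_Icc_self hx))
          (hψ'_cont.neg.intervalIntegrable_of_Icc hab)
    _ = ψ a - ψ b := by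
        rw [intervalIntegral.integral_neg, integral_eq_sub_of_hasDerivAt
          (by rwa [uIcc_of_le hab]) (hψ'_cont.intervalIntegrable_of_Icc hab)]
        ring

section FirstDerivativeTest

open Complex

theorem integral_exp_mul_I_eq_parts {φ φ' φ'' : ℝ → ℝ} {a b : ℝ} (hab : a ≤ b)
    (hφ : ∀ x ∈ Icc a b, HasDerivAt φ (φ' x) x)
    (hφ' : ∀ x ∈ Icc a b, HasDerivAt φ' (φ'' x) x)
    (hφ''_cont : ContinuousOn φ'' (Icc a b)) (hφ'_ne : ∀ x ∈ Icc a b, φ' x ≠ 0) :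
    ∫ x in a..b, cexp (φ x * I)
      = ((φ' b)⁻¹ : ℝ) * (-I * cexp (φ b * I)) - ((φ' a)⁻¹ : ℝ) * (-I * cexp (φ a * I))
        - ∫ x in a..b, (-φ'' x / φ' x ^ 2) • (-I * cexp (φ x * I)) := by
  have hφ'_cont : ContinuousOn φ' (Icc a b) :=
    fun x hx => (hφ' x hx).continuousAt.continuousWithinAt
  have hφ_cont : ContinuousOn φ (Icc a b) :=
    fun x hx => (hφ x hx).continuousAt.continuousWithinAt
  have hu'_cont : ContinuousOn (fun x => -φ'' x / φ' x ^ 2) (Icc a b) :=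
    hφ''_cont.neg.div (hφ'_cont.pow 2) fun x hx => pow_ne_zero 2 (hφ'_ne x hx)
  have hv'_cont : ContinuousOn (fun x => (φ' x : ℂ) * cexp (φ x * I)) (Icc a b) := by fun_prop
  have hexp_eq : ∀ x ∈ uIcc a b,
      cexp (φ x * I) = (((φ' x)⁻¹ : ℝ) : ℂ) * (φ' x * cexp (φ x * I)) := by
    rw [uIcc_of_le hab]
    intro x hx
    rw [ofReal_inv, ← mul_assoc, inv_mul_cancel₀ (ofReal_ne_zero.2 (hφ'_ne x hx)), one_mul]
  rw [← uIcc_of_le hab] at hφ hφ' hφ'_ne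
  simp_rw [integral_congr hexp_eq, real_smul]
  refine integral_mul_deriv_eq_deriv_mul (v := fun x => -I * cexp (φ x * I))
    (fun x hx => ((hφ' x hx).fun_inv (hφ'_ne x hx)).ofReal_comp) (fun x hx => ?_)
    ((continuous_ofReal.comp_continuousOn hu'_cont).intervalIntegrable_of_Icc hab)
    (hv'_cont.intervalIntegrable_of_Icc hab)
  refine ((((hφ x hx).ofReal_comp.mul_const I).cexp).const_mul (-I)).congr_deriv ?_
  linear_combination (-(φ' x : ℂ) * cexp (φ x * I)) * I_sq

-- As `1 / φ'` is antitone, the integral remaining after integration by parts is at most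
-- `1 / φ' a - 1 / φ' b`.
theorem norm_integral_exp_mul_I_le {φ φ' φ'' : ℝ → ℝ} {a b m : ℝ} (hab : a ≤ b)
    (hm : 0 < m) (hφ : ∀ x ∈ Icc a b, HasDerivAt φ (φ' x) x)
    (hφ' : ∀ x ∈ Icc a b, HasDerivAt φ' (φ'' x) x)
    (hφ''_cont : ContinuousOn φ'' (Icc a b))
    (hφ'_ge : ∀ x ∈ Icc a b, m ≤ φ' x) (hφ''_nonneg : ∀ x ∈ Icc a b, 0 ≤ φ'' x) :
    ‖∫ x in a..b, cexp (φ x * I)‖ ≤ 2 / m := by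
  have hφ'_pos : ∀ x ∈ Icc a b, 0 < φ' x := fun x hx => hm.trans_le (hφ'_ge x hx)
  have hφ'_cont : ContinuousOn φ' (Icc a b) :=
    fun x hx => (hφ' x hx).continuousAt.continuousWithinAt
  have hv_norm : ∀ x, ‖-I * cexp (φ x * I)‖ = 1 := fun x => by
    rw [norm_mul, norm_neg, norm_I, norm_exp_ofReal_mul_I, one_mul]
  have hboundary : ∀ x ∈ Icc a b, ‖(((φ' x)⁻¹ : ℝ) : ℂ) * (-I * cexp (φ x * I))‖ = (φ' x)⁻¹ :=
    fun x hx => by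
      rw [norm_mul, hv_norm, mul_one, norm_real,
        Real.norm_of_nonneg (inv_nonneg.2 (hφ'_pos x hx).le)]
  have hrem := norm_integral_deriv_smul_le_sub hab
    (fun x hx => (hφ' x hx).fun_inv (hφ'_pos x hx).ne')
    (hφ''_cont.neg.div (hφ'_cont.pow 2) fun x hx => pow_ne_zero 2 (hφ'_pos x hx).ne')
    (fun x hx => div_nonpos_of_nonpos_of_nonneg (neg_nonpos.2 (hφ''_nonneg x hx)) (sq_nonneg _))
    (fun x => (hv_norm x).le)
  have ha : a ∈ Icc a b := left_mem_Icc.2 hab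
  have hb : b ∈ Icc a b := right_mem_Icc.2 hab
  rw [integral_exp_mul_I_eq_parts hab hφ hφ' hφ''_cont fun x hx => (hφ'_pos x hx).ne']
  calc _ ≤ (φ' b)⁻¹ + (φ' a)⁻¹ + ((φ' a)⁻¹ - (φ' b)⁻¹) := by
        refine (norm_sub_le _ _).trans (add_le_add ((norm_sub_le _ _).trans_eq ?_) hrem)
        rw [hboundary b hb, hboundary a ha]
    _ = 2 * (φ' a)⁻¹ := by ring
    _ ≤ 2 / m := by
        rw [div_eq_mul_inv]
        gcongr
        exact hφ'_ge a ha

end FirstDerivativeTest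

-- `‖f x‖² ≤ 2A² / (1 + (A x / B)²)`, and the right side has integral `2πAB` over `ℝ`.
theorem integral_norm_sq_le_of_norm_le {E : Type*} [NormedAddCommGroup E] {f : ℝ → E}
    {A B a b : ℝ} (hA : 0 < A) (hB : 0 < B) (hab : a ≤ b) (hf : Continuous f)
    (hfA : ∀ x, ‖f x‖ ≤ A) (hfB : ∀ x, |x| * ‖f x‖ ≤ B) :
    ∫ x in a..b, ‖f x‖ ^ 2 ≤ 2 * π * A * B := by
  set c := A / B with hc
  have hc0 : 0 < c := div_pos hA hB
  have hpoint : ∀ x, ‖f x‖ ^ 2 ≤ 2 * A ^ 2 * (1 + (c * x) ^ 2)⁻¹ := fun x => by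
    rw [← div_eq_mul_inv, le_div_iff₀ (by positivity)]
    have h1 : ‖f x‖ ^ 2 ≤ A ^ 2 := pow_le_pow_left₀ (norm_nonneg _) (hfA x) 2
    have h2 : (|x| * ‖f x‖) ^ 2 ≤ B ^ 2 := pow_le_pow_left₀ (by positivity) (hfB x) 2
    have h3 : c ^ 2 * B ^ 2 = A ^ 2 := by rw [hc]; field_simp
    calc ‖f x‖ ^ 2 * (1 + (c * x) ^ 2) = ‖f x‖ ^ 2 + c ^ 2 * (|x| * ‖f x‖) ^ 2 := by
          rw [mul_pow, mul_pow, sq_abs]; ring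
      _ ≤ A ^ 2 + c ^ 2 * B ^ 2 := by gcongr
      _ = 2 * A ^ 2 := by rw [h3]; ring
  have hmajorant : ∫ x in a..b, 2 * A ^ 2 * (1 + (c * x) ^ 2)⁻¹
      = 2 * A ^ 2 * c⁻¹ * (arctan (c * b) - arctan (c * a)) := by
    rw [intervalIntegral.integral_const_mul,
      integral_comp_mul_left (fun t => (1 + t ^ 2)⁻¹) hc0.ne', integral_inv_one_add_sq, smul_eq_mul]
    ring
  calc ∫ x in a..b, ‖f x‖ ^ 2 ≤ ∫ x in a..b, 2 * A ^ 2 * (1 + (c * x) ^ 2)⁻¹ :=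
        integral_mono_on hab ((hf.norm.pow 2).intervalIntegrable _ _)
          (Continuous.intervalIntegrable (continuous_const.mul
            (Continuous.inv₀ (by fun_prop) fun x => by positivity)) _ _)
          fun x _ => hpoint x
    _ = 2 * A ^ 2 * c⁻¹ * (arctan (c * b) - arctan (c * a)) := hmajorant
    _ ≤ 2 * A ^ 2 * c⁻¹ * π := by
        gcongr
        linarith [arctan_lt_pi_div_two (c * b), neg_pi_div_two_lt_arctan (c * a)]
    _ = 2 * π * A * B := by rw [hc]; field_simp

section Iint

open Complex ComplexConjugate

theorem Iint_eq_integral_exp_mul_I (X α : ℝ) :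
    Iint X α = ∫ y in (X / 2)..X, cexp ((2 * π * α * (y * Real.log y) : ℝ) * I) := by
  refine integral_congr fun y _ => ?_
  push_cast
  ring_nf

theorem continuous_Iint (X : ℝ) : Continuous (Iint X) := by
  simp_rw [show Iint X = _ from funext (Iint_eq_integral_exp_mul_I X)]
  apply continuous_parametric_intervalIntegral_of_continuous'
  have hmul_log := Real.continuous_mul_log
  fun_prop

theorem norm_Iint_le (X α : ℝ) (hX : 0 ≤ X) : ‖Iint X α‖ ≤ X / 2 := by
  rw [Iint_eq_integral_exp_mul_I]
  refine (norm_integral_le_of_norm_le_const fun y _ => (norm_exp_ofReal_mul_I _).le).trans_eq ?_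
  rw [abs_of_nonneg (by linarith)]
  ring

theorem Iint_neg (X α : ℝ) : Iint X (-α) = conj (Iint X α) := by
  simp_rw [Iint_eq_integral_exp_mul_I, ← intervalIntegral_conj, ← exp_conj, map_mul, conj_ofReal,
    conj_I]
  refine integral_congr fun y _ => ?_
  push_cast
  ring_nf

theorem norm_Iint_le_of_pos (X α : ℝ) (hX : 2 ≤ X) (hα : 0 < α) :
    ‖Iint X α‖ ≤ 2 / (2 * π * α) := by
  rw [Iint_eq_integral_exp_mul_I]
  have hpos : ∀ y ∈ Icc (X / 2) X, 0 < y := fun y hy => by linarith [hy.1]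
  refine norm_integral_exp_mul_I_le (φ' := fun y => 2 * π * α * (Real.log y + 1))
    (φ'' := fun y => 2 * π * α * y⁻¹) (by linarith) (by positivity)
    (fun y hy => (Real.hasDerivAt_mul_log (hpos y hy).ne').const_mul _)
    (fun y hy => ((Real.hasDerivAt_log (hpos y hy).ne').add_const 1).const_mul _)
    (continuousOn_const.mul (continuousOn_inv₀.mono fun y hy => (hpos y hy).ne'))
    (fun y hy => ?_) (fun y hy => by have hy₀ := hpos y hy; positivity)
  have hlog : 0 ≤ Real.log y := Real.log_nonneg (by linarith [hy.1])
  have hm : 0 < 2 * π * α := by positivity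
  nlinarith

theorem abs_mul_norm_Iint_le (X α : ℝ) (hX : 2 ≤ X) : |α| * ‖Iint X α‖ ≤ π⁻¹ := by
  have hpos : ∀ β : ℝ, 0 < β → β * ‖Iint X β‖ ≤ π⁻¹ := fun β hβ => by
    calc β * ‖Iint X β‖ ≤ β * (2 / (2 * π * β)) := by
          gcongr
          exact norm_Iint_le_of_pos X β hX hβ
      _ = π⁻¹ := by field_simp
  rcases lt_trichotomy α 0 with hα | rfl | hα
  · simpa [abs_of_neg hα, Iint_neg] using hpos (-α) (neg_pos.2 hα)
  · simp [pi_pos.le]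
  · simpa [abs_of_pos hα] using hpos α hα

end Iint

theorem stmt8 :
    ∃ C : ℝ, 0 < C ∧ ∃ X₀ : ℝ, ∀ X : ℝ, X ≥ X₀ →
      ∫ α in (-(X ^ (-(23 : ℝ) / 25)))..(X ^ (-(23 : ℝ) / 25)),
          ‖Iint X α‖ ^ 2
        ≤ C * X := by
  refine ⟨1, one_pos, 2, fun X hX => ?_⟩
  have hτ : 0 < X ^ (-(23 : ℝ) / 25) := by positivity
  calc _ ≤ 2 * π * (X / 2) * π⁻¹ :=
        integral_norm_sq_le_of_norm_le (by linarith) (inv_pos.2 pi_pos) (by linarith)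
          (continuous_Iint X) (fun α => norm_Iint_le X α (by linarith))
          (fun α => abs_mul_norm_Iint_le X α hX)
    _ = 1 * X := by field_simp
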